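/- arXiv:math/0301052 — 4 statements merged into one kernel-verified Lean document; each statement's English description precedes it below -/
import Mathlib

section
/- Let n ≥ 2, and for vectors ξ, y ∈ ℝⁿ (with indices raised/lowered by a nondegenerate symmetric bilinear form g) define the n×n matrix A with entries A^i_j = yⁱξⱼ − ξⁱy_j + (ξₖyᵏ)δ^i_j. Then det(A) = (ξᵢξⁱ)(y_jyʲ)(ξₖyᵏ)^{n−2}. -/
open Matrix

lemma aux_det_rank_two (n : ℕ) (hn : 2 ≤ n)
    (U : Matrix (Fin n) (Fin 2) ℝ) (V : Matrix (Fin 2) (Fin n) ℝ) (t : ℝ) :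
    Matrix.det (t • (1 : Matrix (Fin n) (Fin n) ℝ) + U * V) =
      t ^ (n - 2) * Matrix.det (t • (1 : Matrix (Fin 2) (Fin 2) ℝ) + V * U) := by
  have h1 : Continuous fun t : ℝ =>
      Matrix.det (t • (1 : Matrix (Fin n) (Fin n) ℝ) + U * V) := by
    apply Continuous.matrix_det
    fun_prop
  have h2 : Continuous fun t : ℝ =>
      t ^ (n - 2) * Matrix.det (t • (1 : Matrix (Fin 2) (Fin 2) ℝ) + V * U) := by
    apply Continuous.mul (by fun_prop)
    apply Continuous.matrix_det
    fun_prop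
  have key : Set.EqOn (fun t : ℝ =>
      Matrix.det (t • (1 : Matrix (Fin n) (Fin n) ℝ) + U * V))
      (fun t : ℝ => t ^ (n - 2) *
        Matrix.det (t • (1 : Matrix (Fin 2) (Fin 2) ℝ) + V * U)) {(0 : ℝ)}ᶜ := by
    intro t ht
    simp only [Set.mem_compl_iff, Set.mem_singleton_iff] at ht
    have e1 : t • (1 : Matrix (Fin n) (Fin n) ℝ) + U * V
        = t • ((1 : Matrix (Fin n) (Fin n) ℝ) + (t⁻¹ • U) * V) := by
      rw [Matrix.smul_mul, smul_add, smul_smul, mul_inv_cancel₀ ht, one_smul]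
    have e2 : t • (1 : Matrix (Fin 2) (Fin 2) ℝ) + V * U
        = t • ((1 : Matrix (Fin 2) (Fin 2) ℝ) + V * (t⁻¹ • U)) := by
      rw [Matrix.mul_smul, smul_add, smul_smul, mul_inv_cancel₀ ht, one_smul]
    show Matrix.det (t • (1 : Matrix (Fin n) (Fin n) ℝ) + U * V)
        = t ^ (n - 2) * Matrix.det (t • (1 : Matrix (Fin 2) (Fin 2) ℝ) + V * U)
    rw [e1, e2, Matrix.det_smul, Matrix.det_smul, Fintype.card_fin, Fintype.card_fin,
      Matrix.det_one_add_mul_comm]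
    rw [← mul_assoc, ← pow_add]
    congr 2
    omega
  have := Continuous.ext_on (dense_compl_singleton (0 : ℝ)) h1 h2 key
  exact congrFun this t

/-- For a nondegenerate symmetric bilinear form `G` on `ℝⁿ`
(`n ≥ 2`), with `ξⁱ = (G⁻¹ξ)ⁱ`, `y_j = (Gy)_j`, the matrix
`A^i_j = yⁱξⱼ − ξⁱy_j + (ξₖyᵏ)δ^i_j` has determinant
`(ξᵢξⁱ)(y_jyʲ)(ξₖyᵏ)^{n−2}`. -/
theorem det_inversion_matrix (n : ℕ) (hn : 2 ≤ n)
    (G : Matrix (Fin n) (Fin n) ℝ) (hG : G.IsSymm) (hGdet : IsUnit G.det)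
    (ξ y : Fin n → ℝ) :
    Matrix.det (Matrix.of fun i j =>
        y i * ξ j - (G⁻¹ *ᵥ ξ) i * (G *ᵥ y) j +
          (ξ ⬝ᵥ y) * (if i = j then 1 else 0)) =
      (ξ ⬝ᵥ (G⁻¹ *ᵥ ξ)) * (y ⬝ᵥ (G *ᵥ y)) * (ξ ⬝ᵥ y) ^ (n - 2) := by
  set c : ℝ := ξ ⬝ᵥ y with hc
  set U : Matrix (Fin n) (Fin 2) ℝ :=
    Matrix.of fun i k => if k = 0 then y i else -((G⁻¹ *ᵥ ξ) i) with hU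
  set V : Matrix (Fin 2) (Fin n) ℝ :=
    Matrix.of fun k j => if k = 0 then ξ j else (G *ᵥ y) j with hV
  have hEq : (Matrix.of fun i j =>
        y i * ξ j - (G⁻¹ *ᵥ ξ) i * (G *ᵥ y) j +
          (ξ ⬝ᵥ y) * (if i = j then 1 else 0))
      = c • (1 : Matrix (Fin n) (Fin n) ℝ) + U * V := by
    ext i j
    simp only [Matrix.of_apply, Matrix.add_apply, Matrix.smul_apply, Matrix.one_apply,
      Matrix.mul_apply, Fin.sum_univ_two, hU, hV]
    norm_num
    by_cases h : i = j <;> simp [h, ← hc] <;> ring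
  rw [hEq, aux_det_rank_two n hn U V c]
  have h5 : (G⁻¹ *ᵥ ξ) ᵥ* G = ξ := by
    rw [← Matrix.mulVec_transpose, hG.eq, Matrix.mulVec_mulVec,
      Matrix.mul_nonsing_inv G hGdet, Matrix.one_mulVec]
  have hdual : (G *ᵥ y) ⬝ᵥ (G⁻¹ *ᵥ ξ) = c := by
    rw [dotProduct_comm, Matrix.dotProduct_mulVec, h5, hc]
  have hVU : c • (1 : Matrix (Fin 2) (Fin 2) ℝ) + V * U
      = !![c + c, -(ξ ⬝ᵥ (G⁻¹ *ᵥ ξ)); (G *ᵥ y) ⬝ᵥ y, 0] := by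
    ext i j
    fin_cases i <;> fin_cases j
    · simp [Matrix.mul_apply, hU, hV, Matrix.one_apply, dotProduct, ← hc]
      simp [hc, dotProduct]
    · simp [Matrix.mul_apply, hU, hV, Matrix.one_apply, dotProduct,
        Finset.sum_neg_distrib]
    · simp [Matrix.mul_apply, hU, hV, Matrix.one_apply, dotProduct]
    · have h6 : ∑ x : Fin n, (G *ᵥ y) x * (G⁻¹ *ᵥ ξ) x = c := hdual
      simp only [Matrix.add_apply, Matrix.smul_apply, Matrix.one_apply,
        Matrix.mul_apply, hU, hV, Matrix.of_apply]
      norm_num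
      rw [h6]
      ring
  rw [hVU, Matrix.det_fin_two_of, dotProduct_comm (G *ᵥ y) y]
  ring
end

section
/- Let ⋆ and ⋆′ be two associative star-products with B₁ = B′₁ = ½{·,·} (half the Poisson bracket of a Poisson bivector Π), agreeing up to order r−1, and suppose B_r − B′_r = k·Λ for a bivector Λ. Then expressing the Jacobi identities of the associated star-commutators [F,G]_⋆ = (1/iℏ)(F⋆G − G⋆F) and comparing at order r−1 yields k·[Π,Λ] = 0 (Schouten bracket); hence if [Π,Λ] ≠ 0 then k = 0. -/
/-- The trilinear expression representing the Schouten bracket `[Π,Λ]` of two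
Poisson-type bivectors through their brackets `p` and `l`:
`[Π,Λ](F,G,H) = Σ_cyc (p(l(F,G),H) + l(p(F,G),H))`. -/
def mixedJacobiator {S : Type*} [CommRing S] (p l : S → S → S) (F G H : S) : S :=
  (p (l F G) H + l (p F G) H) + (p (l G H) F + l (p G H) F)
    + (p (l H F) G + l (p H F) G)

def cjTerm {S : Type*} [CommRing S] (B : ℕ → S → S → S) (m j : ℕ) (F G H : S) : S :=
  (B (m - j) (B j F G - B j G F) H - B (m - j) H (B j F G - B j G F))
  + (B (m - j) (B j G H - B j H G) F - B (m - j) F (B j G H - B j H G))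
  + (B (m - j) (B j H F - B j F H) G - B (m - j) G (B j H F - B j F H))

lemma jacSum {S : Type*} [CommRing S] (B : ℕ → S → S → S)
    (hsub₁ : ∀ (j : ℕ) (X Y Z : S), B j (X - Y) Z = B j X Z - B j Y Z)
    (hsub₂ : ∀ (j : ℕ) (Z X Y : S), B j Z (X - Y) = B j Z X - B j Z Y)
    (hassoc : ∀ (m : ℕ) (F G H : S),
      ∑ j ∈ Finset.range (m + 1), B (m - j) (B j F G) H =
        ∑ j ∈ Finset.range (m + 1), B (m - j) F (B j G H))
    (m : ℕ) (F G H : S) :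
    ∑ j ∈ Finset.range (m + 1), cjTerm B m j F G H = 0 := by
  simp only [cjTerm, hsub₁, hsub₂, Finset.sum_add_distrib, Finset.sum_sub_distrib]
  linear_combination hassoc m F G H - hassoc m G F H + hassoc m G H F - hassoc m H G F
    + hassoc m H F G - hassoc m F H G


/-- Let `⋆ = Σ(iℏ)^r B_r` and `⋆′ = Σ(iℏ)^r B′_r` be two
associative star-products (order-by-order associativity) with the same
first-order skew part `B₁ − B₁ᵗ = {·,·} = pb`, agreeing up to order `r−1`, and
with `B_r − B′_r = k·Λ` for a skew bivector bracket `lam`. Then comparing the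
Jacobi identities of the star-commutators at order `r−1` yields
`k·[Π,Λ] = 0`; hence if `[Π,Λ] ≠ 0` then `k = 0`. -/
theorem bivector_difference_vanishes
    (S : Type*) [CommRing S] [Algebra ℂ S]
    (B B' : ℕ → S → S → S) (pb lam : S → S → S) (k : ℂ) (r : ℕ) (hr : 2 ≤ r)
    (hBadd₁ : ∀ (j : ℕ) (F F' G : S), B j (F + F') G = B j F G + B j F' G)
    (hBadd₂ : ∀ (j : ℕ) (F G G' : S), B j F (G + G') = B j F G + B j F G')
    (hBsmul₁ : ∀ (j : ℕ) (c : ℂ) (F G : S), B j (c • F) G = c • B j F G)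
    (hBsmul₂ : ∀ (j : ℕ) (c : ℂ) (F G : S), B j F (c • G) = c • B j F G)
    (hB'add₁ : ∀ (j : ℕ) (F F' G : S), B' j (F + F') G = B' j F G + B' j F' G)
    (hB'add₂ : ∀ (j : ℕ) (F G G' : S), B' j F (G + G') = B' j F G + B' j F G')
    (hB'smul₁ : ∀ (j : ℕ) (c : ℂ) (F G : S), B' j (c • F) G = c • B' j F G)
    (hB'smul₂ : ∀ (j : ℕ) (c : ℂ) (F G : S), B' j F (c • G) = c • B' j F G)
    (hB0 : ∀ F G : S, B 0 F G = F * G)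
    (hB'0 : ∀ F G : S, B' 0 F G = F * G)
    (hskew1 : ∀ F G : S, B 1 F G - B 1 G F = pb F G)
    (hskew1' : ∀ F G : S, B' 1 F G - B' 1 G F = pb F G)
    (hassoc : ∀ (m : ℕ) (F G H : S),
      ∑ j ∈ Finset.range (m + 1), B (m - j) (B j F G) H =
        ∑ j ∈ Finset.range (m + 1), B (m - j) F (B j G H))
    (hassoc' : ∀ (m : ℕ) (F G H : S),
      ∑ j ∈ Finset.range (m + 1), B' (m - j) (B' j F G) H =
        ∑ j ∈ Finset.range (m + 1), B' (m - j) F (B' j G H))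
    (hagree : ∀ j, j < r → B j = B' j)
    (hdiff : ∀ F G : S, B r F G - B' r F G = k • lam F G)
    (hlamskew : ∀ F G : S, lam F G = - lam G F) :
    (∀ F G H : S, k • mixedJacobiator pb lam F G H = 0) ∧
    ((¬ ∀ F G H : S, mixedJacobiator pb lam F G H = 0) → k = 0) := by
  have main : ∀ F G H : S, k • mixedJacobiator pb lam F G H = 0 := by
    -- linearity consequences
    have hsub₁ : ∀ (j : ℕ) (X Y Z : S), B j (X - Y) Z = B j X Z - B j Y Z := by
      intro j X Y Z
      have hneg : B j (-Y) Z = -(B j Y Z) := by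
        rw [← neg_one_smul ℂ Y, hBsmul₁, neg_one_smul]
      rw [sub_eq_add_neg, hBadd₁, hneg, ← sub_eq_add_neg]
    have hsub₂ : ∀ (j : ℕ) (Z X Y : S), B j Z (X - Y) = B j Z X - B j Z Y := by
      intro j Z X Y
      have hneg : B j Z (-Y) = -(B j Z Y) := by
        rw [← neg_one_smul ℂ Y, hBsmul₂, neg_one_smul]
      rw [sub_eq_add_neg, hBadd₂, hneg, ← sub_eq_add_neg]
    have hsub₁' : ∀ (j : ℕ) (X Y Z : S), B' j (X - Y) Z = B' j X Z - B' j Y Z := by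
      intro j X Y Z
      have hneg : B' j (-Y) Z = -(B' j Y Z) := by
        rw [← neg_one_smul ℂ Y, hB'smul₁, neg_one_smul]
      rw [sub_eq_add_neg, hB'add₁, hneg, ← sub_eq_add_neg]
    have hsub₂' : ∀ (j : ℕ) (Z X Y : S), B' j Z (X - Y) = B' j Z X - B' j Z Y := by
      intro j Z X Y
      have hneg : B' j Z (-Y) = -(B' j Z Y) := by
        rw [← neg_one_smul ℂ Y, hB'smul₂, neg_one_smul]
      rw [sub_eq_add_neg, hB'add₂, hneg, ← sub_eq_add_neg]
    have hz₁ : ∀ (j : ℕ) (Z : S), B j 0 Z = 0 := by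
      intro j Z
      have := hBsmul₁ j 0 0 Z
      simpa using this
    have hz₂ : ∀ (j : ℕ) (Z : S), B j Z 0 = 0 := by
      intro j Z
      have := hBsmul₂ j 0 Z 0
      simpa using this
    have hz₁' : ∀ (j : ℕ) (Z : S), B' j 0 Z = 0 := by
      intro j Z
      have := hB'smul₁ j 0 0 Z
      simpa using this
    have hz₂' : ∀ (j : ℕ) (Z : S), B' j Z 0 = 0 := by
      intro j Z
      have := hB'smul₂ j 0 Z 0
      simpa using this
    set c : S := algebraMap ℂ S k with hc
    have hdiffc : ∀ X Y : S, B r X Y - B' r X Y = c * lam X Y := by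
      intro X Y; rw [hdiff, Algebra.smul_def]
    intro F G H
    have hJ := jacSum B hsub₁ hsub₂ hassoc (r + 1) F G H
    have hJ' := jacSum B' hsub₁' hsub₂' hassoc' (r + 1) F G H
    set T1 : S := 2 * c * (lam (pb F G) H + lam (pb G H) F + lam (pb H F) G) with hT1
    set Tr : S := 2 * c * (pb (lam F G) H + pb (lam G H) F + pb (lam H F) G) with hTr
    have hpt : ∀ j ∈ Finset.range (r + 1 + 1),
        cjTerm B (r + 1) j F G H - cjTerm B' (r + 1) j F G H
          = (if j = 1 then T1 else 0) + (if j = r then Tr else 0) := by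
      intro j hj
      rw [Finset.mem_range] at hj
      by_cases h0 : j = 0
      · subst h0
        rw [if_neg (by omega), if_neg (by omega)]
        have e : ∀ X Y : S, B 0 X Y - B 0 Y X = 0 := by
          intro X Y; rw [hB0, hB0, mul_comm, sub_self]
        have e' : ∀ X Y : S, B' 0 X Y - B' 0 Y X = 0 := by
          intro X Y; rw [hB'0, hB'0, mul_comm, sub_self]
        simp [cjTerm, e, e', hz₁, hz₂, hz₁', hz₂']
      by_cases h1 : j = 1
      · subst h1
        rw [if_pos rfl, if_neg (by omega), add_zero]
        have hB1 : B 1 = B' 1 := hagree 1 (by omega)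
        simp only [cjTerm, show r + 1 - 1 = r from rfl, ← hB1, hskew1 F G, hskew1 G H,
          hskew1 H F]
        -- goal in terms of B r, B' r on pb-values
        rw [hT1]
        linear_combination hdiffc (pb F G) H - hdiffc H (pb F G)
          + hdiffc (pb G H) F - hdiffc F (pb G H)
          + hdiffc (pb H F) G - hdiffc G (pb H F)
          - c * (hlamskew H (pb F G)) - c * (hlamskew F (pb G H)) - c * (hlamskew G (pb H F))
      by_cases hrr : j = r
      · rw [if_neg h1, if_pos hrr, zero_add, hrr]
        have hB1 : B 1 = B' 1 := hagree 1 (by omega)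
        have hd₁ : ∀ X Y Z : S, B 1 (B r X Y) Z - B 1 (B' r X Y) Z = c * B 1 (lam X Y) Z := by
          intro X Y Z
          rw [← hsub₁ 1, hdiff, hBsmul₁, Algebra.smul_def]
        have hd₂ : ∀ X Y Z : S, B 1 Z (B r X Y) - B 1 Z (B' r X Y) = c * B 1 Z (lam X Y) := by
          intro X Y Z
          rw [← hsub₂ 1, hdiff, hBsmul₂, Algebra.smul_def]
        have hn₁ : ∀ X Y Z : S, B 1 (lam X Y) Z = -(B 1 (lam Y X) Z) := by
          intro X Y Z
          rw [hlamskew X Y, ← neg_one_smul ℂ (lam Y X), hBsmul₁, neg_one_smul]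
        have hn₂ : ∀ X Y Z : S, B 1 Z (lam X Y) = -(B 1 Z (lam Y X)) := by
          intro X Y Z
          rw [hlamskew X Y, ← neg_one_smul ℂ (lam Y X), hBsmul₂, neg_one_smul]
        have hpb : ∀ X Z : S, pb X Z = B 1 X Z - B 1 Z X := fun X Z => (hskew1 X Z).symm
        simp only [cjTerm, show r + 1 - r = 1 by omega, ← hB1, hsub₁ 1, hsub₂ 1]
        rw [hTr, hpb (lam F G) H, hpb (lam G H) F, hpb (lam H F) G]
        linear_combination hd₁ F G H - hd₁ G F H - hd₂ F G H + hd₂ G F H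
            - c * hn₁ G F H + c * hn₂ G F H
          + hd₁ G H F - hd₁ H G F - hd₂ G H F + hd₂ H G F - c * hn₁ H G F + c * hn₂ H G F
          + hd₁ H F G - hd₁ F H G - hd₂ H F G + hd₂ F H G - c * hn₁ F H G + c * hn₂ F H G
      by_cases hr1 : j = r + 1
      · subst hr1
        rw [if_neg (by omega), if_neg (by omega)]
        simp [cjTerm, Nat.sub_self, hB0, hB'0, mul_comm, mul_sub, sub_mul]
      · -- middle case
        rw [if_neg h1, if_neg hrr]
        have hjr : j < r := by omega
        have hmj : r + 1 - j < r := by omega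
        simp [cjTerm, hagree j hjr, hagree (r + 1 - j) hmj]
    have hsum : ∑ j ∈ Finset.range (r + 1 + 1),
        (cjTerm B (r + 1) j F G H - cjTerm B' (r + 1) j F G H) = T1 + Tr := by
      rw [Finset.sum_congr rfl hpt, Finset.sum_add_distrib,
        Finset.sum_ite_eq' (Finset.range (r + 1 + 1)) 1 (fun _ => T1),
        Finset.sum_ite_eq' (Finset.range (r + 1 + 1)) r (fun _ => Tr),
        if_pos (Finset.mem_range.mpr (by omega)), if_pos (Finset.mem_range.mpr (by omega))]
    rw [Finset.sum_sub_distrib, hJ, hJ', sub_zero] at hsum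
    -- so T1 + Tr = 0, i.e. 2*c*mJ = 0
    have h2 : 2 * c * mixedJacobiator pb lam F G H = 0 := by
      rw [mixedJacobiator]
      linear_combination -hsum
    have h2k : (2 * k) • mixedJacobiator pb lam F G H = 0 := by
      rw [Algebra.smul_def, map_mul, map_ofNat, ← hc]
      linear_combination h2
    have hhalf : (2:ℂ)⁻¹ • ((2 * k) • mixedJacobiator pb lam F G H)
        = k • mixedJacobiator pb lam F G H := by
      rw [smul_smul, show (2:ℂ)⁻¹ * (2 * k) = k by ring]
    rw [← hhalf, h2k, smul_zero]
  refine ⟨main, fun h => ?_⟩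
  by_contra hk
  apply h
  intro F G H
  have h1 := main F G H
  have h2 : (k⁻¹ * k) • mixedJacobiator pb lam F G H = 0 := by
    rw [mul_smul, h1, smul_zero]
  rwa [inv_mul_cancel₀ hk, one_smul] at h2
end

section
/- The coefficients B^{k,ℓ}_{α,β,0,0} = ((−1)^β/(α+β)!) · [C(½(n−1)+k+ℓ−β, α) · C(½(n−1)+k+ℓ−α, β)] / C(n+2k+2ℓ−α−β, α+β) (where C(a,m) denotes the generalized binomial coefficient a(a−1)⋯(a−m+1)/m!) depend only on κ = k+ℓ, and C_{α,β}(κ) := B^{k,ℓ}_{α,β,0,0} satisfies the recursion (r−j)(r−n−2κ)C_{r−j,j}(κ) + ½(n+2κ−2j−1)C_{r−j−1,j}(κ−1) = 0, together with the normalizations C_{0,0}(κ) = 1, C_{1,0}(κ) = ½, C_{0,1}(κ) = −½. -/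
/-- The generalized binomial coefficient `C(a,m) = a(a−1)⋯(a−m+1)/m!`. -/
def genBinom (a : ℚ) (m : ℕ) : ℚ :=
  (∏ i ∈ Finset.range m, (a - (i : ℚ))) / (m.factorial : ℚ)

/-- The coefficients
`C_{α,β}(κ) = ((−1)^β/(α+β)!)·C(½(n−1)+κ−β, α)·C(½(n−1)+κ−α, β) / C(n+2κ−α−β, α+β)`
(equal to `B^{k,ℓ}_{α,β,0,0}` with `κ = k+ℓ`). -/
def coefC (n : ℕ) (α β : ℕ) (κ : ℚ) : ℚ :=
  ((-1) ^ β / ((α + β).factorial : ℚ)) *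
    (genBinom (((n : ℚ) - 1) / 2 + κ - (β : ℚ)) α *
      genBinom (((n : ℚ) - 1) / 2 + κ - (α : ℚ)) β) /
    genBinom ((n : ℚ) + 2 * κ - (α : ℚ) - (β : ℚ)) (α + β)

lemma genBinom_zero (a : ℚ) : genBinom a 0 = 1 := by simp [genBinom]

lemma genBinom_one (a : ℚ) : genBinom a 1 = a := by simp [genBinom]

lemma genBinom_succ (a : ℚ) (m : ℕ) :
    genBinom a (m + 1) = a * genBinom (a - 1) m / (m + 1) := by
  unfold genBinom
  rw [Finset.prod_range_succ', Nat.factorial_succ]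
  have h : ∀ i ∈ Finset.range m, a - ((i : ℕ) + 1 : ℕ) = a - 1 - (i : ℚ) := by
    intro i _; push_cast; ring
  rw [Finset.prod_congr rfl h]
  have hm : (m.factorial : ℚ) ≠ 0 := by positivity
  have hm1 : ((m : ℚ) + 1) ≠ 0 := by positivity
  push_cast
  field_simp
  ring

lemma genBinom_ne_zero_first (a : ℚ) (m : ℕ) (h : genBinom a (m + 1) ≠ 0) : a ≠ 0 := by
  intro ha
  apply h
  rw [genBinom_succ, ha]
  simp

/-- The coefficients `C_{α,β}(κ) = B^{k,ℓ}_{α,β,0,0}`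
satisfy the recursion
`(r−j)(r−n−2κ)C_{r−j,j}(κ) + ½(n+2κ−2j−1)C_{r−j−1,j}(κ−1) = 0`
(whenever the relevant denominators do not vanish), together with the
normalizations `C_{0,0}(κ) = 1`, `C_{1,0}(κ) = ½`, `C_{0,1}(κ) = −½`. -/
theorem coefC_recursion_and_normalization
    (n : ℕ) (hn : 0 < n) (κ : ℚ) (r j : ℕ) (hj : j < r)
    (h1 : genBinom ((n : ℚ) + 2 * κ - (r : ℚ)) r ≠ 0)
    (h2 : genBinom ((n : ℚ) + 2 * κ - 1 - (r : ℚ)) (r - 1) ≠ 0)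
    (h3 : (n : ℚ) + 2 * κ - 1 ≠ 0) :
    ((r : ℚ) - (j : ℚ)) * ((r : ℚ) - (n : ℚ) - 2 * κ) * coefC n (r - j) j κ
        + (1 / 2) * ((n : ℚ) + 2 * κ - 2 * (j : ℚ) - 1) *
            coefC n (r - j - 1) j (κ - 1) = 0 ∧
    coefC n 0 0 κ = 1 ∧ coefC n 1 0 κ = 1 / 2 ∧ coefC n 0 1 κ = -(1 / 2) := by
  refine ⟨?_, ?_, ?_, ?_⟩
  · -- recursion
    obtain ⟨s, rfl⟩ : ∃ s, r = j + s + 1 := ⟨r - j - 1, by omega⟩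
    have hrj : j + s + 1 - j = s + 1 := by omega
    have hrj1 : j + s + 1 - j - 1 = s := by omega
    rw [hrj1, hrj]
    unfold coefC
    set M : ℚ := ((n : ℚ) - 1) / 2 + κ with hM
    have hA : (n : ℚ) + 2 * κ - ((j + s + 1 : ℕ) : ℚ) ≠ 0 := by
      have : (j + s + 1 : ℕ) = (j + s) + 1 := rfl
      rw [this] at h1
      exact genBinom_ne_zero_first _ _ h1
    have hA' : 2 * M - (j : ℚ) - (s : ℚ) ≠ 0 := by
      intro h; apply hA; rw [hM] at h; push_cast; linarith
    -- rewrite the four genBinom terms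
    have e1 : genBinom (M - (j : ℚ)) (s + 1)
        = (M - j) * genBinom (M - 1 - (j : ℚ)) s / (s + 1) := by
      rw [genBinom_succ]; ring_nf
    have e2 : genBinom ((n : ℚ) + 2 * κ - ((s + 1 : ℕ) : ℚ) - (j : ℚ)) (s + 1 + j)
        = (2 * M - (j : ℚ) - (s : ℚ)) *
            genBinom ((n : ℚ) + 2 * κ - 1 - 1 - ((s : ℕ) : ℚ) - (j : ℚ)) (s + j)
              / (s + j + 1) := by
      have hsj : s + 1 + j = (s + j) + 1 := by omega
      rw [hsj, genBinom_succ]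
      have harg : (n : ℚ) + 2 * κ - ((s + 1 : ℕ) : ℚ) - (j : ℚ) = 2 * M - (j:ℚ) - (s:ℚ) := by
        push_cast; rw [hM]; ring
      rw [harg]
      have harg2 : 2 * M - (j:ℚ) - (s:ℚ) - 1 = (n : ℚ) + 2 * κ - 1 - 1 - ((s : ℕ) : ℚ) - (j : ℚ) := by
        push_cast; rw [hM]; ring
      rw [harg2]
      push_cast
      ring
    have e3 : ((n : ℚ) - 1) / 2 + (κ - 1) - (j : ℚ) = M - 1 - (j : ℚ) := by
      rw [hM]; ring
    have e4 : M - ((s + 1 : ℕ) : ℚ) = M - 1 - ((s : ℕ) : ℚ) := by push_cast; ring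
    have e5 : (n : ℚ) + 2 * (κ - 1) - (s : ℚ) - (j : ℚ)
        = (n : ℚ) + 2 * κ - 1 - 1 - ((s : ℕ) : ℚ) - (j : ℚ) := by ring
    have e6 : ((n : ℚ) - 1) / 2 + (κ - 1) - (s : ℚ) = M - 1 - ((s : ℕ) : ℚ) := by
      rw [hM]; ring
    have ef : (((s + 1 + j).factorial : ℕ) : ℚ)
        = ((s + j : ℕ) + 1 : ℚ) * (((s + j).factorial : ℕ) : ℚ) := by
      have h : s + 1 + j = (s + j) + 1 := by omega
      rw [h, Nat.factorial_succ]; push_cast; ring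
    rw [e1, e2, e3, e5, e6, e4, ef]
    rcases eq_or_ne (genBinom ((n : ℚ) + 2 * κ - 1 - 1 - ((s : ℕ) : ℚ) - (j : ℚ)) (s + j)) 0
      with hG3 | hG3
    · rw [hG3]; simp
    · have hf : (((s + j).factorial : ℕ) : ℚ) ≠ 0 := by positivity
      have hs1 : ((s : ℚ) + 1) ≠ 0 := by positivity
      have hsj1 : ((s + j : ℕ) : ℚ) + 1 ≠ 0 := by positivity
      push_cast
      field_simp
      ring
  · simp [coefC, genBinom_zero]
  · simp only [coefC, zero_add, add_zero, genBinom_one, genBinom_zero, Nat.factorial_one,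
      Nat.cast_one, Nat.cast_zero, pow_zero, pow_one, sub_zero, mul_one, one_mul]
    rw [div_eq_div_iff h3 two_ne_zero]
    ring
  · simp only [coefC, zero_add, add_zero, genBinom_one, genBinom_zero, Nat.factorial_one,
      Nat.cast_one, Nat.cast_zero, pow_zero, pow_one, sub_zero, mul_one, one_mul]
    field_simp
    ring
end

section
/- Suppose ⋆ and ⋆′ are two star-products on a Poisson algebra that are both 𝔤-covariant (J_X ⋆ J_Y − J_Y ⋆ J_X = iℏ{J_X,J_Y} and likewise for ⋆′), and suppose they are related by a formal reparametrization: F ⋆′ G = Σ_r (μ(iℏ))^r B_r(F,G) where F ⋆ G = Σ_r (iℏ)^r B_r(F,G) and μ(iℏ) = iℏ + Σ_{k≥2} a_k(iℏ)^k. If there exist X, Y in 𝔤 with B_1(J_X,J_Y) − B_1(J_Y,J_X) = {J_X,J_Y} ≠ 0, then μ(iℏ) = iℏ (all a_k = 0), and hence ⋆ = ⋆′. -/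
/-!
Skew-symmetrising the reparametrized product on the covariant pair `Jx, Jy` kills every term
except `m = 1`, because `B₀` is commutative and the higher skew parts of `⋆` vanish. So the
order-`r` skew part of `⋆′` is `coeff r μ • {Jx, Jy}`, and covariance of `⋆′` together with
`{Jx, Jy} ≠ 0` forces `coeff r μ = 0` for all `r ≥ 2`, i.e. `μ = X`.
-/

open PowerSeries Finset

namespace PowerSeries

variable {K M : Type*} [CommRing K] [AddCommGroup M] [Module K M]

/-- Substitution of `μ` for `t` in `Σ_m t^m w_m`; summing over `m ≤ r` only is exact when `μ` has
no constant term. -/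
noncomputable def reparametrize (μ : K⟦X⟧) (w : ℕ → M) (r : ℕ) : M :=
  ∑ m ∈ range (r + 1), coeff r (μ ^ m) • w m

theorem reparametrize_sub (μ : K⟦X⟧) (v w : ℕ → M) (r : ℕ) :
    reparametrize μ (v - w) r = reparametrize μ v r - reparametrize μ w r := by
  simp only [reparametrize, Pi.sub_apply, smul_sub, sum_sub_distrib]

theorem reparametrize_X (w : ℕ → M) : reparametrize (X : K⟦X⟧) w = w := by
  funext r
  simp [reparametrize, coeff_X_pow, ite_smul, sum_ite_eq]

theorem reparametrize_of_ne_one {μ : K⟦X⟧} {w : ℕ → M} (hw : ∀ m ≠ 1, w m = 0) {r : ℕ}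
    (hr : 1 ≤ r) : reparametrize μ w r = coeff r μ • w 1 := by
  rw [reparametrize, sum_eq_single 1 (fun m _ hm => by rw [hw m hm, smul_zero])
    (fun h => absurd (mem_range.2 (by omega)) h), pow_one]

theorem eq_X_of_coeff {μ : K⟦X⟧} (h0 : constantCoeff μ = 0) (h1 : coeff 1 μ = 1)
    (hhi : ∀ r, 2 ≤ r → coeff r μ = 0) : μ = X := by
  ext (_ | _ | r)
  · simpa using h0
  · simpa using h1
  · rw [coeff_X, hhi _ (by omega), if_neg (by omega)]

end PowerSeries

theorem covariant_reparametrization_is_trivial_general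
    (S : Type*) [CommRing S] [Algebra ℂ S]
    (B B' : ℕ → S → S → S) (μ : PowerSeries ℂ)
    (hμ0 : PowerSeries.constantCoeff μ = 0)
    (hμ1 : PowerSeries.coeff 1 μ = 1)
    (hB' : ∀ (r : ℕ) (F G : S),
      B' r F G = ∑ m ∈ Finset.range (r + 1),
        PowerSeries.coeff r (μ ^ m) • B m F G)
    (hB0 : ∀ F G : S, B 0 F G = F * G)
    (Jx Jy P : S) (hP : P ≠ 0)
    (hcov1 : B 1 Jx Jy - B 1 Jy Jx = P)
    (hcovhi : ∀ r : ℕ, 2 ≤ r → B r Jx Jy - B r Jy Jx = 0)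
    (hcovhi' : ∀ r : ℕ, 2 ≤ r → B' r Jx Jy - B' r Jy Jx = 0) :
    μ = PowerSeries.X ∧ ∀ r : ℕ, B' r = B r := by
  have hB'_eq : ∀ r F G, B' r F G = reparametrize μ (B · F G) r := hB'
  have hskew : ∀ m ≠ 1, B m Jx Jy - B m Jy Jx = 0
    | 0, _ => by rw [hB0, hB0, mul_comm, sub_self]
    | m + 2, _ => hcovhi (m + 2) (by omega)
  have hhi : ∀ r, 2 ≤ r → coeff r μ = 0 := by
    intro r hr
    have h := hcovhi' r hr
    rw [hB'_eq, hB'_eq, ← reparametrize_sub,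
      reparametrize_of_ne_one (w := (B · Jx Jy) - (B · Jy Jx)) hskew (by omega), Pi.sub_apply,
      hcov1] at h
    exact (smul_eq_zero.mp h).resolve_right hP
  have hμX : μ = X := eq_X_of_coeff hμ0 hμ1 hhi
  refine ⟨hμX, fun r => funext₂ fun F G => ?_⟩
  rw [hB'_eq, hμX, reparametrize_X]

/-- Let `⋆ = Σ_r (iℏ)^r B_r` be a star-product and
`⋆′ = Σ_r (iℏ)^r B′_r` its reparametrization by a formal series
`μ(iℏ) = iℏ + Σ_{k≥2} a_k (iℏ)^k` (so `B′_r(F,G) = Σ_m coeff_r(μ^m)·B_m(F,G)`).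
If both products are 𝔤-covariant, witnessed by elements `Jx`, `Jy` with
`B₁(Jx,Jy) − B₁(Jy,Jx) = {Jx,Jy} = P ≠ 0` and vanishing higher skew parts,
then `μ(iℏ) = iℏ` and hence `⋆ = ⋆′`. -/
theorem covariant_reparametrization_is_trivial
    (S : Type*) [CommRing S] [Algebra ℂ S]
    (B B' : ℕ → S → S → S) (μ : PowerSeries ℂ)
    (hμ0 : PowerSeries.constantCoeff μ = 0)
    (hμ1 : PowerSeries.coeff 1 μ = 1)
    (hB' : ∀ (r : ℕ) (F G : S),
      B' r F G = ∑ m ∈ Finset.range (r + 1),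
        PowerSeries.coeff r (μ ^ m) • B m F G)
    (hB0 : ∀ F G : S, B 0 F G = F * G)
    (Jx Jy P : S) (hP : P ≠ 0)
    (hcov1 : B 1 Jx Jy - B 1 Jy Jx = P)
    (hcovhi : ∀ r : ℕ, 2 ≤ r → B r Jx Jy - B r Jy Jx = 0)
    (hcov1' : B' 1 Jx Jy - B' 1 Jy Jx = P)
    (hcovhi' : ∀ r : ℕ, 2 ≤ r → B' r Jx Jy - B' r Jy Jx = 0) :
    μ = PowerSeries.X ∧ ∀ r : ℕ, B' r = B r :=
  covariant_reparametrization_is_trivial_general S B B' μ hμ0 hμ1 hB' hB0 Jx Jy P hP hcov1 hcovhi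
    hcovhi'
end
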